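/- arXiv:1611.03756 — 3 statements merged into one kernel-verified Lean document; each statement's English description precedes it below -/
import Mathlib

section
/- Let d ∈ (0,1) and let (n, v, E, B) be a smooth solution of the normalized one-fluid Euler–Maxwell system on ℝ³ × [0,T]. Then the vorticity Y := B − ∇×v satisfies the transport-type equation ∂_t Y = ∇×(v × Y) on ℝ³ × [0,T]. -/
noncomputable section
open MeasureTheory Set ENNReal Real

/-- Physical space `ℝ³`. -/
abbrev R3 := Fin 3 → ℝ

/-- The partial derivative `∂ᵢ f`. -/
def pd (i : Fin 3) (f : R3 → ℝ) : R3 → ℝ := fun x => fderiv ℝ f x (Pi.single i 1)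

/-- The (spatial) divergence of a vector field. -/
def sdiv (v : R3 → R3) (x : R3) : ℝ := ∑ i, pd i (fun y => v y i) x

/-- The (spatial) curl of a vector field, componentwise. -/
def scurl (v : R3 → R3) (x : R3) (i : Fin 3) : ℝ :=
  pd (i + 1) (fun y => v y (i + 2)) x - pd (i + 2) (fun y => v y (i + 1)) x

/-- The cross product on `ℝ³`. -/
def cross (a b : R3) : R3 := fun i => a (i + 1) * b (i + 2) - a (i + 2) * b (i + 1)

/-- A scalar function of time and space, jointly smooth. -/
def SmoothTS (f : ℝ → R3 → ℝ) : Prop := ContDiff ℝ (⊤ : ℕ∞) fun p : ℝ × R3 => f p.1 p.2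

/-- A vector function of time and space, jointly smooth. -/
def SmoothTSV (f : ℝ → R3 → R3) : Prop := ContDiff ℝ (⊤ : ℕ∞) fun p : ℝ × R3 => f p.1 p.2

/-- The normalized one-fluid Euler–Maxwell system with parameter `d`, imposed for times in `S`:
`∂ₜn + div((1+n)v) = 0`, `∂ₜv + (v·∇)v + d∇n + E + v×B = 0`,
`∂ₜE − ∇×B − (1+n)v = 0`, `∂ₜB + ∇×E = 0`. -/
def NormalizedEM (d : ℝ) (S : Set ℝ) (n : ℝ → R3 → ℝ) (v E B : ℝ → R3 → R3) : Prop :=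
  ∀ t ∈ S, ∀ x : R3,
    (deriv (fun s => n s x) t + sdiv (fun y => (1 + n t y) • v t y) x = 0) ∧
    (∀ i, deriv (fun s => v s x i) t + (∑ j, v t x j * pd j (fun y => v t y i) x)
        + d * pd i (n t) x + E t x i + cross (v t x) (B t x) i = 0) ∧
    (∀ i, deriv (fun s => E s x i) t - scurl (B t) x i - (1 + n t x) * v t x i = 0) ∧
    (∀ i, deriv (fun s => B s x i) t + scurl (E t) x i = 0)

section Helpers
variable {EE : Type*} [NormedAddCommGroup EE] [NormedSpace ℝ EE]

lemma fderiv_apply_comm (F : EE → ℝ) (hF : ContDiff ℝ (⊤ : ℕ∞) F) (p u w : EE) :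
    fderiv ℝ (fun q => fderiv ℝ F q u) p w = fderiv ℝ (fun q => fderiv ℝ F q w) p u := by
  have hdF : Differentiable ℝ (fderiv ℝ F) :=
    (hF.fderiv_right (m := (⊤ : ℕ∞)) (by simp)).differentiable (by simp)
  have key : ∀ z : EE, fderiv ℝ (fun q => fderiv ℝ F q z) p
      = (ContinuousLinearMap.apply ℝ ℝ z).comp (fderiv ℝ (fderiv ℝ F) p) := by
    intro z
    have : (fun q => fderiv ℝ F q z) = (ContinuousLinearMap.apply ℝ ℝ z) ∘ (fderiv ℝ F) := rfl
    rw [this, fderiv_comp p (ContinuousLinearMap.apply ℝ ℝ z).differentiableAt (hdF p),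
      ContinuousLinearMap.fderiv]
  rw [key u, key w]
  have hsym := second_derivative_symmetric (f := F) (f' := fderiv ℝ F)
    (f'' := fderiv ℝ (fderiv ℝ F) p) (x := p)
    (fun y => (hF.differentiable (by simp) y).hasFDerivAt) ((hdF p).hasFDerivAt) w u
  simpa using hsym

lemma hasDerivAt_slice (G : ℝ × R3 → ℝ) (hG : Differentiable ℝ G) (t : ℝ) (x : R3) :
    HasDerivAt (fun s => G (s, x)) (fderiv ℝ G (t, x) (1, 0)) t :=
  (hG (t, x)).hasFDerivAt.comp_hasDerivAt t ((hasDerivAt_id t).prodMk (hasDerivAt_const t x))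

lemma deriv_slice (G : ℝ × R3 → ℝ) (hG : Differentiable ℝ G) (t : ℝ) (x : R3) :
    deriv (fun s => G (s, x)) t = fderiv ℝ G (t, x) (1, 0) :=
  (hasDerivAt_slice G hG t x).deriv

lemma pd_slice (G : ℝ × R3 → ℝ) (hG : Differentiable ℝ G) (t : ℝ) (x : R3) (i : Fin 3) :
    pd i (fun y => G (t, y)) x = fderiv ℝ G (t, x) (0, Pi.single i 1) := by
  have h : HasFDerivAt (fun y : R3 => G (t, y))
      ((fderiv ℝ G (t, x)).comp ((0 : R3 →L[ℝ] ℝ).prod (ContinuousLinearMap.id ℝ R3))) x :=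
    (hG (t, x)).hasFDerivAt.comp x ((hasFDerivAt_const t x).prodMk (hasFDerivAt_id x))
  simp [pd, h.fderiv]

lemma contDiff_fderiv_apply (F : EE → ℝ) (hF : ContDiff ℝ (⊤ : ℕ∞) F) (u : EE) :
    ContDiff ℝ (⊤ : ℕ∞) (fun q => fderiv ℝ F q u) :=
  (ContinuousLinearMap.apply ℝ ℝ u).contDiff.comp (hF.fderiv_right (m := (⊤ : ℕ∞)) (by simp))

/-- Commute time derivative with spatial partial derivative. -/
lemma comm_ts (f : ℝ → R3 → ℝ) (hf : ContDiff ℝ (⊤ : ℕ∞) fun p : ℝ × R3 => f p.1 p.2)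
    (t : ℝ) (x : R3) (i : Fin 3) :
    deriv (fun s => pd i (f s) x) t = pd i (fun y => deriv (fun s => f s y) t) x := by
  set F : ℝ × R3 → ℝ := fun p => f p.1 p.2 with hFdef
  have hdF : Differentiable ℝ F := hf.differentiable (by simp)
  have h1 : (fun s => pd i (f s) x) = fun s => fderiv ℝ F (s, x) (0, Pi.single i 1) := by
    funext s; exact pd_slice F hdF s x i
  have h2 : (fun y => deriv (fun s => f s y) t) = fun y => fderiv ℝ F (t, y) (1, 0) := by
    funext y; exact deriv_slice F hdF t y
  rw [h1, h2,
    deriv_slice (fun q => fderiv ℝ F q (0, Pi.single i 1))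
      ((contDiff_fderiv_apply F hf _).differentiable (by simp)) t x,
    pd_slice (fun q => fderiv ℝ F q (1, 0))
      ((contDiff_fderiv_apply F hf _).differentiable (by simp)) t x i,
    fderiv_apply_comm F hf]

/-- Clairaut in space. -/
lemma pd_pd_comm (g : R3 → ℝ) (hg : ContDiff ℝ (⊤ : ℕ∞) g) (x : R3) (i j : Fin 3) :
    pd i (fun y => pd j g y) x = pd j (fun y => pd i g y) x := by
  simpa [pd] using fderiv_apply_comm g hg x (Pi.single j 1) (Pi.single i 1)

lemma contDiff_pd (g : R3 → ℝ) (hg : ContDiff ℝ (⊤ : ℕ∞) g) (i : Fin 3) :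
    ContDiff ℝ (⊤ : ℕ∞) (pd i g) := contDiff_fderiv_apply g hg _

lemma pd_congr {g h : R3 → ℝ} (H : ∀ y, g y = h y) (i : Fin 3) (x : R3) :
    pd i g x = pd i h x := by
  have : g = h := funext H
  rw [this]

lemma pd_const (c : ℝ) (i : Fin 3) (x : R3) : pd i (fun _ => c) x = 0 := by simp [pd]

lemma pd_neg (g : R3 → ℝ) (i : Fin 3) (x : R3) :
    pd i (fun y => -g y) x = -pd i g x := by simp [pd]

lemma pd_add (g h : R3 → ℝ) (hg : DifferentiableAt ℝ g x) (hh : DifferentiableAt ℝ h x)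
    (i : Fin 3) : pd i (fun y => g y + h y) x = pd i g x + pd i h x := by
  simp [pd, fderiv_fun_add hg hh]

lemma pd_sub (g h : R3 → ℝ) (hg : DifferentiableAt ℝ g x) (hh : DifferentiableAt ℝ h x)
    (i : Fin 3) : pd i (fun y => g y - h y) x = pd i g x - pd i h x := by
  simp [pd, fderiv_fun_sub hg hh]

lemma pd_mul (g h : R3 → ℝ) (hg : DifferentiableAt ℝ g x) (hh : DifferentiableAt ℝ h x)
    (i : Fin 3) : pd i (fun y => g y * h y) x = pd i g x * h x + g x * pd i h x := by
  simp [pd, fderiv_fun_mul hg hh]; ring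

lemma pd_const_mul (c : ℝ) (g : R3 → ℝ) (hg : DifferentiableAt ℝ g x) (i : Fin 3) :
    pd i (fun y => c * g y) x = c * pd i g x := by
  simp [pd, fderiv_const_mul hg]

lemma diff_t (f : ℝ → R3 → ℝ) (hf : ContDiff ℝ (⊤ : ℕ∞) fun p : ℝ × R3 => f p.1 p.2)
    (x : R3) (t : ℝ) : DifferentiableAt ℝ (fun s => f s x) t :=
  (hasDerivAt_slice (fun p => f p.1 p.2) (hf.differentiable (by simp)) t x).differentiableAt

lemma diff_pd_t (f : ℝ → R3 → ℝ) (hf : ContDiff ℝ (⊤ : ℕ∞) fun p : ℝ × R3 => f p.1 p.2)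
    (a : Fin 3) (x : R3) (t : ℝ) : DifferentiableAt ℝ (fun s => pd a (f s) x) t := by
  have h1 : (fun s => pd a (f s) x)
      = fun s => fderiv ℝ (fun p : ℝ × R3 => f p.1 p.2) (s, x) (0, Pi.single a 1) := by
    funext s; exact pd_slice _ (hf.differentiable (by simp)) s x a
  rw [h1]
  exact (hasDerivAt_slice _
    ((contDiff_fderiv_apply _ hf _).differentiable (by simp)) t x).differentiableAt

lemma slice_contDiff (f : ℝ → R3 → ℝ) (hf : ContDiff ℝ (⊤ : ℕ∞) fun p : ℝ × R3 => f p.1 p.2)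
    (t : ℝ) : ContDiff ℝ (⊤ : ℕ∞) (fun y => f t y) :=
  hf.comp (contDiff_const.prodMk contDiff_id)

end Helpers

/-- the vorticity `Y = B − ∇×v` of a smooth solution of the normalized
one-fluid Euler–Maxwell system satisfies `∂ₜY = ∇×(v×Y)` on `ℝ³ × [0,T]`. -/
theorem vorticity_equation (d T : ℝ) (hd : d ∈ Ioo (0:ℝ) 1)
    (n : ℝ → R3 → ℝ) (v E B : ℝ → R3 → R3)
    (hn : SmoothTS n) (hv : SmoothTSV v) (hE : SmoothTSV E) (hB : SmoothTSV B)
    (hsol : NormalizedEM d (Icc 0 T) n v E B) :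
    ∀ t ∈ Icc (0:ℝ) T, ∀ (x : R3) (i : Fin 3),
      deriv (fun s => B s x i - scurl (v s) x i) t
        = scurl (fun y => cross (v t y) (fun j => B t y j - scurl (v t) y j)) x i := by
  intro t ht x i
  -- joint smoothness of components
  have hvF : ∀ m : Fin 3, ContDiff ℝ (⊤ : ℕ∞) fun p : ℝ × R3 => v p.1 p.2 m :=
    fun m => contDiff_pi.mp hv m
  have hBF : ∀ m : Fin 3, ContDiff ℝ (⊤ : ℕ∞) fun p : ℝ × R3 => B p.1 p.2 m :=
    fun m => contDiff_pi.mp hB m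
  -- spatial smoothness at time t
  have hvt : ∀ m : Fin 3, ContDiff ℝ (⊤ : ℕ∞) (fun y => v t y m) :=
    fun m => slice_contDiff (fun s y => v s y m) (hvF m) t
  have hBt : ∀ m : Fin 3, ContDiff ℝ (⊤ : ℕ∞) (fun y => B t y m) :=
    fun m => slice_contDiff (fun s y => B s y m) (hBF m) t
  have hEt : ∀ m : Fin 3, ContDiff ℝ (⊤ : ℕ∞) (fun y => E t y m) :=
    fun m => slice_contDiff (fun s y => E s y m) (contDiff_pi.mp hE m) t
  have hnt : ContDiff ℝ (⊤ : ℕ∞) (n t) := slice_contDiff n hn t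
  -- step 1: split the time derivative
  have hd1 : DifferentiableAt ℝ (fun s => B s x i) t := diff_t (fun s y => B s y i) (hBF i) x t
  have hd2 : DifferentiableAt ℝ (fun s => scurl (v s) x i) t := by
    simp only [scurl]
    exact (diff_pd_t (fun s y => v s y (i+2)) (hvF (i+2)) (i+1) x t).sub (diff_pd_t (fun s y => v s y (i+1)) (hvF (i+1)) (i+2) x t)
  rw [deriv_fun_sub hd1 hd2]
  -- step 2: time derivative of B from Maxwell
  have hBe : deriv (fun s => B s x i) t = - scurl (E t) x i := by
    have := (hsol t ht x).2.2.2 i; linarith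
  -- step 3: time derivative of the curl, commuted
  have hcurl : deriv (fun s => scurl (v s) x i) t
      = pd (i+1) (fun y => deriv (fun s => v s y (i+2)) t) x
        - pd (i+2) (fun y => deriv (fun s => v s y (i+1)) t) x := by
    simp only [scurl]
    rw [deriv_fun_sub (diff_pd_t (fun s y => v s y (i+2)) (hvF (i+2)) (i+1) x t) (diff_pd_t (fun s y => v s y (i+1)) (hvF (i+1)) (i+2) x t),
      comm_ts (fun s y => v s y (i+2)) (hvF (i+2)) t x (i+1), comm_ts (fun s y => v s y (i+1)) (hvF (i+1)) t x (i+2)]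
  rw [hBe, hcurl]
  -- step 4: the momentum equation, pointwise in space
  have hsum : ∀ f : Fin 3 → ℝ, ∑ j, f j = f i + f (i+1) + f (i+2) := by
    intro f; fin_cases i <;> simp [Fin.sum_univ_three] <;> ring
  have hA : ∀ (m : Fin 3) (y : R3), deriv (fun s => v s y m) t
      = -((v t y i * pd i (fun z => v t z m) y + v t y (i+1) * pd (i+1) (fun z => v t z m) y
            + v t y (i+2) * pd (i+2) (fun z => v t z m) y)
          + d * pd m (n t) y + E t y m
          + (v t y (m+1) * B t y (m+2) - v t y (m+2) * B t y (m+1))) := by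
    intro m y
    have h := (hsol t ht y).2.1 m
    simp only [hsum, cross] at h
    linarith
  rw [pd_congr (hA (i+2)) (i+1) x, pd_congr (hA (i+1)) (i+2) x]
  -- differentiability facts
  have Dv : ∀ m : Fin 3, Differentiable ℝ (fun y => v t y m) :=
    fun m => (hvt m).differentiable (by simp)
  have DB : ∀ m : Fin 3, Differentiable ℝ (fun y => B t y m) :=
    fun m => (hBt m).differentiable (by simp)
  have DE : ∀ m : Fin 3, Differentiable ℝ (fun y => E t y m) :=
    fun m => (hEt m).differentiable (by simp)
  have Dn : Differentiable ℝ (n t) := hnt.differentiable (by simp)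
  have Dpv : ∀ (a m : Fin 3), Differentiable ℝ (pd a (fun z => v t z m)) :=
    fun a m => (contDiff_pd _ (hvt m) a).differentiable (by simp)
  have Dpn : ∀ a : Fin 3, Differentiable ℝ (pd a (n t)) :=
    fun a => (contDiff_pd _ hnt a).differentiable (by simp)
  -- unfold and expand all spatial derivatives
  simp only [scurl, cross]
  simp (disch := fun_prop) only [pd_neg, pd_sub, pd_add, pd_mul, pd_const_mul, pd_const]
  have hQ : ∀ a b c : Fin 3, pd a (fun y => pd b (fun z => v t z c) y) x
      = pd b (fun y => pd a (fun z => v t z c) y) x :=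
    fun a b c => pd_pd_comm _ (hvt c) x a b
  have hM : ∀ a b : Fin 3, pd a (fun y => pd b (n t) y) x
      = pd b (fun y => pd a (n t) y) x :=
    fun a b => pd_pd_comm _ hnt x a b
  have e1 : i+1+1 = i+2 := by rw [add_assoc]; rfl
  have e2 : i+1+2 = i := by rw [add_assoc, show (1:Fin 3)+2 = 0 from rfl, add_zero]
  have e3 : i+2+1 = i := by rw [add_assoc, show (2:Fin 3)+1 = 0 from rfl, add_zero]
  have e4 : i+2+2 = i+1 := by rw [add_assoc]; rfl
  simp only [e1, e2, e3, e4]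
  simp only [hQ, hM]
  ring
end
end

section
/- For all real numbers a, b with 0 ≤ a ≤ b, one has √(1+a²) + √(1+b²) − √(1+(a+b)²) ≥ √(1+a²) − a ≥ 1/(2(1+a)). -/
/-- for `0 ≤ a ≤ b`,
`√(1+a²) + √(1+b²) − √(1+(a+b)²) ≥ √(1+a²) − a ≥ 1/(2(1+a))`. -/
theorem sqrt_convexity_bound (a b : ℝ) (ha : 0 ≤ a) (hab : a ≤ b) :
    Real.sqrt (1 + a ^ 2) - a
        ≤ Real.sqrt (1 + a ^ 2) + Real.sqrt (1 + b ^ 2) - Real.sqrt (1 + (a + b) ^ 2) ∧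
      1 / (2 * (1 + a)) ≤ Real.sqrt (1 + a ^ 2) - a := by
  have hb : 0 ≤ b := ha.trans hab
  set s := Real.sqrt (1 + b ^ 2) with hs
  have hs2 : s ^ 2 = 1 + b ^ 2 := Real.sq_sqrt (by positivity)
  have hs0 : 0 ≤ s := Real.sqrt_nonneg _
  have hbs : b ≤ s := by nlinarith
  constructor
  · have h1 : Real.sqrt (1 + (a + b) ^ 2) ≤ a + s := by
      rw [show a + s = Real.sqrt ((a + s) ^ 2) from (Real.sqrt_sq (by positivity)).symm]
      apply Real.sqrt_le_sqrt
      nlinarith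
    linarith
  · have h2 : a + 1 / (2 * (1 + a)) ≤ Real.sqrt (1 + a ^ 2) := by
      apply Real.le_sqrt' (by positivity) |>.mpr
      have h : (0:ℝ) < 2 * (1 + a) := by linarith
      have e : a + 1 / (2 * (1 + a)) = (2 * a * (1 + a) + 1) / (2 * (1 + a)) := by
        field_simp
      rw [e, div_pow, div_le_iff₀ (by positivity)]
      nlinarith
    linarith
end

section
/- Fix d ∈ (0,1) and an integer k₁ with k₁⁺ := max(k₁,0). There exist constants 𝒟 = 𝒟(d) and C = C(d) such that the following holds. Let Φ(ξ,η) = √(1+|ξ|²) ± √(1+d|ξ−η|²) − √(1+|η|²) (either choice of sign), let k ≥ k₁⁺ + 𝒟 − 10, and for ε > 0 define E_ε := {(ξ,η) ∈ ℝ³×ℝ³ : |ξ| ∈ [2^{k−8}, 2^{k+8}], |η| ∈ [2^{k−8}, 2^{k+8}], |ξ−η| ≤ 2^{k₁+8}, |Φ(ξ,η)| ≤ ε}. Then sup_{ξ∈ℝ³} ∫_{ℝ³} 1_{E_ε}(ξ,η) dη + sup_{η∈ℝ³} ∫_{ℝ³} 1_{E_ε}(ξ,η) dξ ≤ C ε 2^{3k₁⁺}.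 -/
/-!
Fix `η` and write `x = t e + w` with `e = η / ‖η‖` and `w ⊥ e`. On the support of the set,
`t ≥ ‖η‖ - 2^{k₁+8} ≳ 2^k` while `‖w‖ ≤ 2^{k₁+8} ≪ 2^k`, so `∂ₜ √(1 + ‖x‖²)` is close to `1`,
whereas `t ↦ √(1 + d ‖x - η‖²)` is `√d`-Lipschitz. Hence the phase is strictly monotone in `t`,
with slope at least `(1 - √d) / 2`, so each line parallel to `e` meets the sublevel set in a
segment of length `O(ε)`, and the lines that meet it at all have `w` in a box of side
`2^{k₁+9}`. Fubini bounds the volume by `O(ε 2^{2k₁})`. The other supremum is the same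
estimate with the roles of `ξ` and `η` exchanged and `±` flipped.
-/

noncomputable section
open MeasureTheory Set ENNReal Real

/-- Frequency space `ℝ³` (Euclidean). -/
abbrev E3 := EuclideanSpace ℝ (Fin 3)

open scoped RealInnerProductSpace

lemma mul_sub_le_sqrt_add_sq_sub {A β u v : ℝ} (hA : 0 < A) (huv : u ≤ v)
    (hu : β * √(A + u ^ 2) ≤ u) (hv : β * √(A + v ^ 2) ≤ v) :
    β * (v - u) ≤ √(A + v ^ 2) - √(A + u ^ 2) := by
  have hU := Real.sq_sqrt (by positivity : 0 ≤ A + u ^ 2)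
  have hV := Real.sq_sqrt (by positivity : 0 ≤ A + v ^ 2)
  have hU0 := Real.sqrt_pos.2 (by positivity : 0 < A + u ^ 2)
  have hV0 := Real.sqrt_pos.2 (by positivity : 0 < A + v ^ 2)
  -- `(V - U) (V + U) = (v - u) (v + u) ≥ β (v - u) (V + U)`
  nlinarith [mul_le_mul_of_nonneg_left (add_le_add hu hv) (sub_nonneg.2 huv)]

lemma abs_sqrt_add_mul_sq_sub_le {A d : ℝ} (hA : 0 < A) (hd : 0 ≤ d) (x y : ℝ) :
    |√(A + d * x ^ 2) - √(A + d * y ^ 2)| ≤ √d * |x - y| := by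
  set X := √(A + d * x ^ 2)
  set Y := √(A + d * y ^ 2)
  have hX0 : 0 < X := Real.sqrt_pos.2 (by positivity)
  have hY0 : 0 < Y := Real.sqrt_pos.2 (by positivity)
  have hx : √d * |x| ≤ X := by
    rw [← Real.sqrt_sq_eq_abs, ← Real.sqrt_mul hd]
    exact Real.sqrt_le_sqrt (by linarith)
  have hy : √d * |y| ≤ Y := by
    rw [← Real.sqrt_sq_eq_abs, ← Real.sqrt_mul hd]
    exact Real.sqrt_le_sqrt (by linarith)
  have hXY : (X - Y) * (X + Y) = √d ^ 2 * ((x - y) * (x + y)) := by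
    rw [Real.sq_sqrt hd]
    linear_combination Real.sq_sqrt (by positivity : 0 ≤ A + d * x ^ 2)
      - Real.sq_sqrt (by positivity : 0 ≤ A + d * y ^ 2)
  refine le_of_mul_le_mul_right ?_ (add_pos hX0 hY0)
  calc |X - Y| * (X + Y) = √d * |x - y| * (√d * |x + y|) := by
        rw [← abs_of_pos (add_pos hX0 hY0), ← abs_mul, hXY, abs_mul, abs_mul,
          abs_of_nonneg (by positivity : 0 ≤ √d ^ 2)]
        ring
    _ ≤ √d * |x - y| * (X + Y) := by
        gcongr
        nlinarith [abs_add_le x y, Real.sqrt_nonneg d]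

lemma one_sub_half_mul_sqrt_le {A δ t : ℝ} (hA : 0 < A) (hδ : δ ≤ 1) (ht : 0 ≤ t)
    (hAt : 2 * A ≤ δ * t ^ 2) : (1 - δ / 2) * √(A + t ^ 2) ≤ t := by
  have hδ0 : 0 ≤ δ := by nlinarith [sq_nonneg t]
  have hβ : (1 - δ / 2) ^ 2 ≤ 1 := by nlinarith
  calc (1 - δ / 2) * √(A + t ^ 2) = √((1 - δ / 2) ^ 2 * (A + t ^ 2)) := by
        rw [Real.sqrt_mul (sq_nonneg _), Real.sqrt_sq (by linarith)]
    _ ≤ √(t ^ 2) := Real.sqrt_le_sqrt (by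
        nlinarith [mul_le_mul_of_nonneg_right hβ hA.le,
          mul_nonneg (mul_nonneg hδ0 (sq_nonneg t)) (by linarith : (0 : ℝ) ≤ 1 / 2 - δ / 4)])
    _ = t := Real.sqrt_sq ht

lemma half_mul_sub_le_phase_sub {d s a W T u v : ℝ} (hd : 0 ≤ d) (hs : |s| = 1) (hW : 0 ≤ W)
    (hT : 0 ≤ T) (hWT : 2 * (1 + W) ≤ (1 - √d) * T ^ 2) (hu : T ≤ u) (huv : u ≤ v) :
    (1 - √d) / 2 * (v - u) ≤
      (√(1 + W + v ^ 2) + s * √(1 + d * W + d * (v - a) ^ 2))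
        - (√(1 + W + u ^ 2) + s * √(1 + d * W + d * (u - a) ^ 2)) := by
  have hδ : 0 < 1 - √d := by nlinarith
  have hδ1 : 1 - √d ≤ 1 := by linarith [Real.sqrt_nonneg d]
  have hbound : ∀ t, T ≤ t → (1 - (1 - √d) / 2) * √(1 + W + t ^ 2) ≤ t := fun t ht =>
    one_sub_half_mul_sqrt_le (by positivity) hδ1 (hT.trans ht)
      (hWT.trans (mul_le_mul_of_nonneg_left (pow_le_pow_left₀ hT ht 2) hδ.le))
  have hfirst := mul_sub_le_sqrt_add_sq_sub (by positivity : (0 : ℝ) < 1 + W) huv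
    (hbound u hu) (hbound v (hu.trans huv))
  have hsecond : |s * √(1 + d * W + d * (v - a) ^ 2) - s * √(1 + d * W + d * (u - a) ^ 2)|
      ≤ √d * (v - u) := by
    rw [← mul_sub, abs_mul, hs, one_mul, ← abs_of_nonneg (sub_nonneg.2 huv),
      show v - u = (v - a) - (u - a) by ring]
    exact abs_sqrt_add_mul_sq_sub_le (by positivity) hd _ _
  linarith [neg_abs_le (s * √(1 + d * W + d * (v - a) ^ 2) - s * √(1 + d * W + d * (u - a) ^ 2))]

lemma abs_sub_le_of_abs_phase_sub_le {d s a W T A ε t t' : ℝ} (hd : 0 ≤ d) (hs : |s| = 1)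
    (hW : 0 ≤ W) (hT : 0 ≤ T) (hWT : 2 * (1 + W) ≤ (1 - √d) * T ^ 2) (ht : T ≤ t) (ht' : T ≤ t')
    (h : |√(1 + W + t ^ 2) + s * √(1 + d * W + d * (t - a) ^ 2) - A| ≤ ε)
    (h' : |√(1 + W + t' ^ 2) + s * √(1 + d * W + d * (t' - a) ^ 2) - A| ≤ ε) :
    |t - t'| ≤ 4 * ε / (1 - √d) := by
  wlog htt' : t ≤ t' generalizing t t'
  · rw [abs_sub_comm]
    exact this ht' ht h' h (le_of_not_ge htt')
  have hδ : 0 < 1 - √d := by nlinarith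
  have := half_mul_sub_le_phase_sub (a := a) hd hs hW hT hWT ht htt'
  rw [abs_sub_comm, abs_of_nonneg (sub_nonneg.2 htt'), le_div_iff₀ hδ]
  linarith [abs_le.1 h, abs_le.1 h']

lemma prod_apply_le_of_fiber {β : Type*} [MeasurableSpace β] {ν : Measure β} [SFinite ν]
    {T : Set (ℝ × β)} (hT : MeasurableSet T) {L : ℝ} {B : Set β} (hB : MeasurableSet B)
    (hfiber : ∀ p ∈ T, ∀ q ∈ T, p.2 = q.2 → |p.1 - q.1| ≤ L) (hmaps : ∀ p ∈ T, p.2 ∈ B) :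
    (volume.prod ν) T ≤ ENNReal.ofReal L * ν B := by
  rw [Measure.prod_apply_symm hT, ← lintegral_indicator_const hB]
  refine lintegral_mono fun w => ?_
  by_cases hw : w ∈ B
  · rw [indicator_of_mem hw]
    exact (Real.volume_le_diam _).trans
      (Metric.ediam_le_of_forall_dist_le fun t ht t' ht' => hfiber _ ht _ ht' rfl)
  · have : (fun t => (t, w)) ⁻¹' T = ∅ :=
      eq_empty_of_forall_notMem fun t ht => hw (hmaps _ ht)
    simp [this]

lemma measure_le_of_fiber {α β : Type*} [MeasurableSpace α] [MeasurableSpace β] {μ : Measure α}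
    {ν : Measure β} [SFinite ν] (F : α ≃ᵐ ℝ × β) (hF : MeasurePreserving F μ (volume.prod ν))
    {S : Set α} (hS : MeasurableSet S) {L : ℝ} {B : Set β} (hB : MeasurableSet B)
    (hfiber : ∀ x ∈ S, ∀ y ∈ S, (F x).2 = (F y).2 → |(F x).1 - (F y).1| ≤ L)
    (hmaps : ∀ x ∈ S, (F x).2 ∈ B) : μ S ≤ ENNReal.ofReal L * ν B := by
  have hpre : F ⁻¹' (F.symm ⁻¹' S) = S := by ext; simp
  rw [← hpre, hF.measure_preimage_equiv]
  refine prod_apply_le_of_fiber (F.symm.measurable hS) hB (fun p hp q hq hpq => ?_)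
    fun p hp => ?_
  · simpa using hfiber _ hp _ hq (by simpa using hpq)
  · simpa using hmaps _ hp

namespace OrthonormalBasis

variable {E : Type*} [NormedAddCommGroup E] [InnerProductSpace ℝ E]

lemma exists_apply_eq {ι : Type*} [Fintype ι] (b₀ : OrthonormalBasis ι ℝ E) (i : ι) {e : E}
    (he : ‖e‖ = 1) : ∃ b : OrthonormalBasis ι ℝ E, b i = e :=
  ⟨b₀.map (Submodule.reflection (ℝ ∙ (b₀ i - e))ᗮ), by
    simpa using Submodule.reflection_sub (by simp [he] : ‖b₀ i‖ = ‖e‖)⟩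

variable {n : ℕ} (b : OrthonormalBasis (Fin (n + 1)) ℝ E)

lemma norm_sq_eq_sum_succ_add (x : E) :
    ‖x‖ ^ 2 = ∑ j : Fin n, ⟪b j.succ, x⟫ ^ 2 + ⟪b 0, x⟫ ^ 2 := by
  rw [← b.sum_sq_inner_right, Fin.sum_univ_succ, add_comm]

lemma inner_zero_sub_smul (a : ℝ) (x : E) : ⟪b 0, x - a • b 0⟫ = ⟪b 0, x⟫ - a := by
  rw [inner_sub_right, real_inner_smul_right, real_inner_self_eq_norm_sq, b.norm_eq_one]
  ring

lemma inner_succ_sub_smul (a : ℝ) (x : E) (j : Fin n) :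
    ⟪b j.succ, x - a • b 0⟫ = ⟪b j.succ, x⟫ := by
  rw [inner_sub_right, real_inner_smul_right, b.inner_eq_zero (Fin.succ_ne_zero j), mul_zero,
    sub_zero]

variable [MeasurableSpace E] [BorelSpace E]

def measurableEquivProd : E ≃ᵐ ℝ × (Fin n → ℝ) :=
  b.repr.toMeasurableEquiv.trans
    ((MeasurableEquiv.toLp 2 _).symm.trans (MeasurableEquiv.piFinSuccAbove (fun _ => ℝ) 0))

lemma measurableEquivProd_apply (x : E) :
    b.measurableEquivProd x = (⟪b 0, x⟫, fun j => ⟪b j.succ, x⟫) := by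
  simp only [measurableEquivProd, MeasurableEquiv.trans_apply,
    LinearIsometryEquiv.coe_toMeasurableEquiv, MeasurableEquiv.piFinSuccAbove_apply]
  exact Prod.ext (b.repr_apply_apply x 0) (funext fun j => b.repr_apply_apply x j.succ)

lemma measurePreserving_measurableEquivProd [FiniteDimensional ℝ E] :
    MeasurePreserving b.measurableEquivProd volume (volume.prod volume) := by
  rw [← Measure.volume_eq_prod]
  exact (volume_preserving_piFinSuccAbove (fun _ => ℝ) 0).comp
    ((EuclideanSpace.volume_preserving_symm_measurableEquiv_toLp _).comp b.measurePreserving_repr)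

end OrthonormalBasis

lemma volume_sublevel_phase_le {E : Type*} [NormedAddCommGroup E] [InnerProductSpace ℝ E]
    [FiniteDimensional ℝ E] [MeasurableSpace E] [BorelSpace E] {n : ℕ}
    (b : OrthonormalBasis (Fin (n + 1)) ℝ E) {d s r T a A ε : ℝ} (hd : 0 ≤ d) (hs : |s| = 1)
    (hr : 0 ≤ r) (hT : 0 ≤ T) (hrT : 2 * (1 + r ^ 2) ≤ (1 - √d) * T ^ 2) (ha : T + r ≤ a) :
    volume {x : E | ‖x - a • b 0‖ ≤ r ∧
        |√(1 + ‖x‖ ^ 2) + s * √(1 + d * ‖x - a • b 0‖ ^ 2) - A| ≤ ε}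
      ≤ ENNReal.ofReal (4 * ε / (1 - √d)) * ENNReal.ofReal ((2 * r) ^ n) := by
  set S := {x : E | ‖x - a • b 0‖ ≤ r ∧
    |√(1 + ‖x‖ ^ 2) + s * √(1 + d * ‖x - a • b 0‖ ^ 2) - A| ≤ ε}
  set F := b.measurableEquivProd
  have hS : MeasurableSet S := by
    simp only [S, ofPred_and]
    exact ((isClosed_le (by fun_prop) continuous_const).inter
      (isClosed_le (by fun_prop) continuous_const)).measurableSet
  have hcoord : ∀ x ∈ S, T ≤ (F x).1 ∧ ∑ j, (F x).2 j ^ 2 ≤ r ^ 2 ∧ (∀ j, |(F x).2 j| ≤ r) ∧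
      |√(1 + ∑ j, (F x).2 j ^ 2 + (F x).1 ^ 2)
        + s * √(1 + d * ∑ j, (F x).2 j ^ 2 + d * ((F x).1 - a) ^ 2) - A| ≤ ε := by
    rintro x ⟨hxr, hxε⟩
    have hnorm := b.norm_sq_eq_sum_succ_add (x - a • b 0)
    simp only [b.inner_zero_sub_smul, b.inner_succ_sub_smul] at hnorm
    rw [hnorm, b.norm_sq_eq_sum_succ_add x, mul_add, ← add_assoc, ← add_assoc] at hxε
    have hsq : ‖x - a • b 0‖ ^ 2 ≤ r ^ 2 := pow_le_pow_left₀ (norm_nonneg _) hxr 2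
    have hinner : ∀ i, |⟪b i, x - a • b 0⟫| ≤ r := fun i =>
      (abs_real_inner_le_norm _ _).trans (by rw [b.norm_eq_one, one_mul]; exact hxr)
    simp only [F, b.measurableEquivProd_apply]
    refine ⟨?_, by nlinarith, fun j => b.inner_succ_sub_smul a x j ▸ hinner j.succ, hxε⟩
    linarith [(abs_le.1 (b.inner_zero_sub_smul a x ▸ hinner 0)).1]
  rw [← Fintype.card_fin n, ← Real.volume_pi_closedBall 0 hr]
  refine measure_le_of_fiber F b.measurePreserving_measurableEquivProd hS
    Metric.isClosed_closedBall.measurableSet (fun x hx y hy hxy => ?_) fun x hx => ?_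
  · obtain ⟨hxT, hxW, -, hxε⟩ := hcoord x hx
    obtain ⟨hyT, -, -, hyε⟩ := hcoord y hy
    rw [← hxy] at hyε
    exact abs_sub_le_of_abs_phase_sub_le hd hs (by positivity) hT
      (hrT.trans' (by linarith)) hxT hyT hxε hyε
  · exact mem_closedBall_zero_iff.2 ((pi_norm_le_iff_of_nonneg hr).2 (hcoord x hx).2.2.1)

lemma two_mul_one_add_sq_le {δ : ℝ} {n : ℕ} (hn : 1 ≤ 2 ^ n * δ) {k₁ k : ℤ}
    (hk : max k₁ 0 + n + 18 ≤ k) :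
    2 * (1 + ((2 : ℝ) ^ (k₁ + 8)) ^ 2) ≤ δ * ((2 : ℝ) ^ (k - 9)) ^ 2 := by
  set X := (2 : ℝ) ^ (max k₁ 0 + 8)
  have hX : 1 ≤ X := one_le_zpow₀ one_le_two (by omega)
  have hr : (2 : ℝ) ^ (k₁ + 8) ≤ X := zpow_le_zpow_right₀ one_le_two (by omega)
  have hY : 2 ^ n * 2 * X ≤ (2 : ℝ) ^ (k - 9) := by
    calc 2 ^ n * 2 * X = (2 : ℝ) ^ ((n : ℤ) + 1 + (max k₁ 0 + 8)) := by
          rw [zpow_add₀ two_ne_zero, zpow_add_one₀ two_ne_zero, zpow_natCast]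
      _ ≤ (2 : ℝ) ^ (k - 9) := zpow_le_zpow_right₀ one_le_two (by omega)
  have h2n : (1 : ℝ) ≤ 2 ^ n := one_le_pow₀ one_le_two
  have hδ : 0 < δ := by nlinarith
  have hr0 : (0 : ℝ) ≤ 2 ^ (k₁ + 8) := by positivity
  nlinarith [pow_le_pow_left₀ (by positivity) hY 2, pow_le_pow_left₀ hr0 hr 2,
    mul_le_mul_of_nonneg_right hn (by positivity : (0 : ℝ) ≤ 4 * 2 ^ n * X ^ 2)]

lemma setOf_phase_swap {E : Type*} [SeminormedAddCommGroup E] (d s r ε : ℝ) (I : Set ℝ)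
    (ξ : E) :
    {η : E | ‖ξ‖ ∈ I ∧ ‖η‖ ∈ I ∧ ‖ξ - η‖ ≤ r ∧
        |√(1 + ‖ξ‖ ^ 2) + s * √(1 + d * ‖ξ - η‖ ^ 2) - √(1 + ‖η‖ ^ 2)| ≤ ε}
      = {x : E | ‖x‖ ∈ I ∧ ‖ξ‖ ∈ I ∧ ‖x - ξ‖ ≤ r ∧
        |√(1 + ‖x‖ ^ 2) + -s * √(1 + d * ‖x - ξ‖ ^ 2) - √(1 + ‖ξ‖ ^ 2)| ≤ ε} := by
  ext x
  rw [mem_ofPred_eq, mem_ofPred_eq, norm_sub_rev ξ x, ← abs_neg,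
    show -(√(1 + ‖ξ‖ ^ 2) + s * √(1 + d * ‖x - ξ‖ ^ 2) - √(1 + ‖x‖ ^ 2))
      = √(1 + ‖x‖ ^ 2) + -s * √(1 + d * ‖x - ξ‖ ^ 2) - √(1 + ‖ξ‖ ^ 2) by ring]
  tauto

lemma volume_slice_le {d s : ℝ} (hd : 0 ≤ d) (hs : |s| = 1) {n : ℕ}
    (hn : 1 ≤ 2 ^ n * (1 - √d)) {k₁ k : ℤ} (hk : max k₁ 0 + n + 18 ≤ k) {ε : ℝ} (hε : 0 ≤ ε)
    (η : E3) :
    volume {x : E3 |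
        ‖x‖ ∈ Icc ((2 : ℝ) ^ (k - 8)) ((2 : ℝ) ^ (k + 8)) ∧
        ‖η‖ ∈ Icc ((2 : ℝ) ^ (k - 8)) ((2 : ℝ) ^ (k + 8)) ∧
        ‖x - η‖ ≤ (2 : ℝ) ^ (k₁ + 8) ∧
        |√(1 + ‖x‖ ^ 2) + s * √(1 + d * ‖x - η‖ ^ 2) - √(1 + ‖η‖ ^ 2)| ≤ ε}
      ≤ ENNReal.ofReal (2 ^ 20 / (1 - √d) * ε * (2 : ℝ) ^ (3 * max k₁ 0)) := by
  by_cases hη : ‖η‖ ∈ Icc ((2 : ℝ) ^ (k - 8)) ((2 : ℝ) ^ (k + 8))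
  swap
  · simp [hη]
  have hδ : 0 < 1 - √d := by nlinarith [one_le_pow₀ (M₀ := ℝ) one_le_two (n := n)]
  have hη0 : ‖η‖ ≠ 0 := (lt_of_lt_of_le (by positivity) hη.1).ne'
  obtain ⟨b, hb⟩ := (EuclideanSpace.basisFun (Fin 3) ℝ).exists_apply_eq 0
    (by rw [norm_smul, norm_inv, norm_norm, inv_mul_cancel₀ hη0] : ‖‖η‖⁻¹ • η‖ = 1)
  have hηb : ‖η‖ • b 0 = η := by rw [hb, smul_smul, mul_inv_cancel₀ hη0, one_smul]
  have hrT : (2 : ℝ) ^ (k₁ + 8) ≤ 2 ^ (k - 9) := zpow_le_zpow_right₀ one_le_two (by omega)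
  have hT : (2 : ℝ) ^ (k - 9) + 2 ^ (k - 9) = 2 ^ (k - 8) := by
    rw [← two_mul, ← zpow_one_add₀ two_ne_zero]; ring_nf
  have hr2 : ((2 : ℝ) ^ (k₁ + 8)) ^ 2 ≤ 2 ^ 16 * 2 ^ (3 * max k₁ 0) := by
    rw [← zpow_natCast, ← zpow_mul, ← zpow_natCast (2 : ℝ) 16, ← zpow_add₀ two_ne_zero]
    exact zpow_le_zpow_right₀ one_le_two (by omega)
  calc _ ≤ volume {x : E3 | ‖x - ‖η‖ • b 0‖ ≤ 2 ^ (k₁ + 8) ∧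
        |√(1 + ‖x‖ ^ 2) + s * √(1 + d * ‖x - ‖η‖ • b 0‖ ^ 2) - √(1 + ‖η‖ ^ 2)| ≤ ε} :=
        measure_mono fun x hx => by rw [hηb]; exact hx.2.2
    _ ≤ ENNReal.ofReal (4 * ε / (1 - √d)) * ENNReal.ofReal ((2 * 2 ^ (k₁ + 8)) ^ 2) :=
        volume_sublevel_phase_le b hd hs (by positivity) (by positivity)
          (two_mul_one_add_sq_le hn hk) (by linarith [hη.1])
    _ ≤ _ := by
        rw [← ENNReal.ofReal_mul (by positivity)]
        refine ENNReal.ofReal_le_ofReal ?_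
        rw [mul_pow, div_mul_eq_mul_div, div_mul_eq_mul_div, div_mul_eq_mul_div,
          div_le_div_iff_of_pos_right hδ]
        nlinarith

/-- improved Schur bound for the `(b;±e,b)` phases: with
`Φ(ξ,η) = √(1+|ξ|²) ± √(1+d|ξ−η|²) − √(1+|η|²)` and `k ≥ k₁⁺ + 𝒟 − 10`, the sublevel set
`E_ε = {|ξ|,|η| ∈ [2^{k−8},2^{k+8}], |ξ−η| ≤ 2^{k₁+8}, |Φ| ≤ ε}` satisfies
`sup_ξ |(E_ε)_ξ| + sup_η |(E_ε)^η| ≤ C ε 2^{3k₁⁺}`. -/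
theorem improved_schur_bound (d : ℝ) (hd : d ∈ Ioo (0:ℝ) 1) (k₁ : ℤ) :
    ∃ D C : ℝ, 0 < D ∧ 0 < C ∧
      ∀ s : ℝ, (s = 1 ∨ s = -1) →
      ∀ k : ℤ, ((max k₁ 0 : ℤ) : ℝ) + D - 10 ≤ (k : ℝ) →
      ∀ ε : ℝ, 0 < ε →
      ∀ ξ η : E3,
        volume {η' : E3 |
            ‖ξ‖ ∈ Icc ((2:ℝ) ^ (k - 8)) ((2:ℝ) ^ (k + 8)) ∧
            ‖η'‖ ∈ Icc ((2:ℝ) ^ (k - 8)) ((2:ℝ) ^ (k + 8)) ∧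
            ‖ξ - η'‖ ≤ (2:ℝ) ^ (k₁ + 8) ∧
            |Real.sqrt (1 + ‖ξ‖ ^ 2) + s * Real.sqrt (1 + d * ‖ξ - η'‖ ^ 2)
              - Real.sqrt (1 + ‖η'‖ ^ 2)| ≤ ε}
          + volume {ξ' : E3 |
            ‖ξ'‖ ∈ Icc ((2:ℝ) ^ (k - 8)) ((2:ℝ) ^ (k + 8)) ∧
            ‖η‖ ∈ Icc ((2:ℝ) ^ (k - 8)) ((2:ℝ) ^ (k + 8)) ∧
            ‖ξ' - η‖ ≤ (2:ℝ) ^ (k₁ + 8) ∧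
            |Real.sqrt (1 + ‖ξ'‖ ^ 2) + s * Real.sqrt (1 + d * ‖ξ' - η‖ ^ 2)
              - Real.sqrt (1 + ‖η‖ ^ 2)| ≤ ε}
          ≤ ENNReal.ofReal (C * ε * (2:ℝ) ^ (3 * max k₁ 0)) := by
  have hδ : 0 < 1 - √d := sub_pos.2 (Real.sqrt_one ▸ Real.sqrt_lt_sqrt hd.1.le hd.2)
  obtain ⟨n, hn⟩ := pow_unbounded_of_one_lt (1 - √d)⁻¹ one_lt_two
  have hn' : 1 ≤ 2 ^ n * (1 - √d) := by
    have := mul_lt_mul_of_pos_right hn hδ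
    rw [inv_mul_cancel₀ hδ.ne'] at this
    exact this.le
  refine ⟨n + 28, 2 * (2 ^ 20 / (1 - √d)), by positivity, by positivity, ?_⟩
  intro s hs k hk ε hε ξ η
  have hs' : |s| = 1 := by rcases hs with rfl | rfl <;> simp
  have hk' : max k₁ 0 + n + 18 ≤ k := by
    have : ((max k₁ 0 + n + 18 : ℤ) : ℝ) ≤ k := by push_cast at hk ⊢; linarith
    exact_mod_cast this
  rw [setOf_phase_swap]
  calc _ ≤ ENNReal.ofReal (2 ^ 20 / (1 - √d) * ε * (2 : ℝ) ^ (3 * max k₁ 0))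
        + ENNReal.ofReal (2 ^ 20 / (1 - √d) * ε * (2 : ℝ) ^ (3 * max k₁ 0)) :=
        add_le_add (volume_slice_le hd.1.le (by rwa [abs_neg]) hn' hk' hε.le ξ)
          (volume_slice_le hd.1.le hs' hn' hk' hε.le η)
    _ = _ := by rw [← ENNReal.ofReal_add (by positivity) (by positivity)]; ring_nf
end
end
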